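/- arXiv:1203.1795 — 4 statements merged into one kernel-verified Lean document; each statement's English description precedes it below -/
import Mathlib

section
/- The Neumann heat kernel satisfies the Chapman–Kolmogorov (semigroup) identity: for all s, t > 0, r ∈ [−1,1] and r′ ∈ (−1,1), ∫_{−1}^{1} P_t(r, y) · P_s(y, r′) dy = P_{t+s}(r, r′). -/
open MeasureTheory

/-- The Gaussian heat kernel on the real line. -/
noncomputable def G (t r r' : ℝ) : ℝ :=
  Real.exp (-(r - r') ^ 2 / (2 * t)) / Real.sqrt (2 * Real.pi * t)

/-- The Neumann heat kernel on `[-1,1]`, obtained from the Gaussian kernel by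
the reflection map: for `r' ∈ (-1,1)`,
`P t r r' = ∑_{n∈ℤ} [G t r (r'+4n) + G t r (2−r'+4n)]`, while at the boundary
`P t r (±1) = ∑_{n∈ℤ} 2·G t r (±1+4n)`. -/
noncomputable def P (t r r' : ℝ) : ℝ :=
  if r' = 1 ∨ r' = -1 then ∑' n : ℤ, 2 * G t r (r' + 4 * n)
  else ∑' n : ℤ, (G t r (r' + 4 * n) + G t r (2 - r' + 4 * n))

/-!
Method of images. The infinite dihedral group `D` generated by the reflections of `ℝ` in `±1`
acts by isometries with fundamental domain `(-1, 1)`, and `P t x y = ∑_{g ∈ D} G t x (g • y)`.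
As `P s · z` is `D`-invariant, unfolding the sum over `D` turns `∫_{-1}^{1} P t x y * P s y z dy`
into `∫_ℝ G t x u * P s u z du`, and the Gaussian semigroup identity
`∫_ℝ G t x u * G s u v du = G (t + s) x v`, applied termwise, gives `P (t + s) x z`.
All terms are nonnegative, so the computation is carried out in `ℝ≥0∞`, where sums and integrals
commute without integrability side conditions.
-/

open Real ProbabilityTheory
open scoped ENNReal

lemma G_nonneg (t a b : ℝ) : 0 ≤ G t a b := by
  unfold G; positivity

lemma G_mul_G {t s : ℝ} (ht : 0 < t) (hs : 0 < s) (a b u : ℝ) :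
    G t a u * G s u b =
      G (t + s) a b * gaussianPDFReal ((s * a + t * b) / (t + s)) (t * s / (t + s)).toNNReal u := by
  rw [gaussianPDFReal, Real.coe_toNNReal _ (by positivity)]
  unfold G
  have hexp : rexp (-(a - u) ^ 2 / (2 * t)) * rexp (-(u - b) ^ 2 / (2 * s)) =
      rexp (-(a - b) ^ 2 / (2 * (t + s))) *
        rexp (-(u - (s * a + t * b) / (t + s)) ^ 2 / (2 * (t * s / (t + s)))) := by
    rw [← Real.exp_add, ← Real.exp_add]
    congr 1
    field_simp
    ring
  have hsqrt : √(2 * π * t) * √(2 * π * s) = √(2 * π * (t + s)) * √(2 * π * (t * s / (t + s))) := by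
    rw [← Real.sqrt_mul (by positivity), ← Real.sqrt_mul (by positivity)]
    congr 1
    field_simp
  rw [div_mul_div_comm, hexp, hsqrt]
  field_simp

lemma lintegral_G_mul_G {t s : ℝ} (ht : 0 < t) (hs : 0 < s) (a b : ℝ) :
    ∫⁻ u, ENNReal.ofReal (G t a u) * ENNReal.ofReal (G s u b) = ENNReal.ofReal (G (t + s) a b) := by
  simp_rw [← ENNReal.ofReal_mul (G_nonneg _ _ _), G_mul_G ht hs,
    ENNReal.ofReal_mul (G_nonneg _ _ _)]
  have hv : (t * s / (t + s)).toNNReal ≠ 0 := by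
    rw [Ne, Real.toNNReal_eq_zero, not_le]; positivity
  have hpdf := lintegral_gaussianPDF_eq_one ((s * a + t * b) / (t + s)) hv
  rw [gaussianPDF_def] at hpdf
  rw [lintegral_const_mul _ (measurable_gaussianPDFReal _ _).ennreal_ofReal, hpdf, mul_one]

lemma summable_G_add_four_mul {t : ℝ} (ht : 0 < t) (a b : ℝ) :
    Summable fun n : ℤ => G t a (b + 4 * n) := by
  -- `(a - (b + 4 n))² = 16 (n + (b - a) / 4)²`: a Jacobi theta series
  refine ((HurwitzKernelBounds.summable_f_int 0 ((b - a) / 4) (t := 8 / (π * t))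
    (by positivity)).div_const √(2 * π * t)).congr fun n => ?_
  rw [HurwitzKernelBounds.f_int, pow_zero, one_mul, G]
  congr 2
  field_simp
  ring

namespace DihedralGroup

/-- `sr 0` and `sr 1` act as the reflections in `1` and `-1`. -/
instance : MulAction (DihedralGroup 0) ℝ where
  smul
    | r i, x => x + 4 * Int.cast (R := ℝ) i
    | sr i, x => 2 - x - 4 * Int.cast (R := ℝ) i
  one_smul x := show x + 4 * ((0 : ℤ) : ℝ) = x by simp
  mul_smul g h x := by
    -- `+` and `-` on `ZMod 0` are those of `ℤ` only up to unfolding, hence `erw`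
    cases g <;> cases h <;>
      simp only [r_mul_r, r_mul_sr, sr_mul_r, sr_mul_sr, HSMul.hSMul, SMul.smul] <;>
      (first | erw [Int.cast_sub] | erw [Int.cast_add]) <;> ring

@[simp] lemma r_smul (i : ℤ) (x : ℝ) : (r i : DihedralGroup 0) • x = x + 4 * i := rfl

@[simp] lemma sr_smul (i : ℤ) (x : ℝ) : (sr i : DihedralGroup 0) • x = 2 - x - 4 * i := rfl

/-- Case analysis with indices in `ℤ` rather than `ZMod 0`, so that `r_smul` and `sr_smul` apply. -/
@[elab_as_elim]
lemma intCases {motive : DihedralGroup 0 → Prop} (r : ∀ i : ℤ, motive (r i))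
    (sr : ∀ i : ℤ, motive (sr i)) : ∀ g, motive g
  | .r i => r i
  | .sr i => sr i

lemma abs_smul_sub_smul (g : DihedralGroup 0) (a b : ℝ) : |g • a - g • b| = |a - b| := by
  cases g using intCases with
  | r i => simp only [r_smul, add_sub_add_right_eq_sub]
  | sr i => rw [sr_smul, sr_smul, ← abs_neg]; ring_nf

instance : ContinuousConstSMul (DihedralGroup 0) ℝ where
  continuous_const_smul g := by
    cases g using intCases with
    | r i => simp only [r_smul]; fun_prop
    | sr i => simp only [sr_smul]; fun_prop

instance : SMulInvariantMeasure (DihedralGroup 0) ℝ volume where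
  measure_preimage_smul g s hs := by
    cases g using intCases with
    | r i =>
      simp only [r_smul]
      exact (measurePreserving_add_right volume _).measure_preimage hs.nullMeasurableSet
    | sr i =>
      simp only [sr_smul, sub_right_comm _ _ (4 * (i : ℝ))]
      exact (Measure.measurePreserving_sub_left volume _).measure_preimage hs.nullMeasurableSet

instance : Countable (DihedralGroup 0) :=
  Function.Injective.countable (β := ℤ ⊕ ℤ) equivSum.injective

lemma tsum_eq_tsum_r_add_tsum_sr (f : DihedralGroup 0 → ℝ≥0∞) :
    ∑' g, f g = ∑' i : ℤ, f (r i) + ∑' i : ℤ, f (sr i) := by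
  rw [← equivSum.symm.tsum_eq, ENNReal.summable.tsum_sum ENNReal.summable]
  rfl

lemma exists_smul_mem_Icc (x : ℝ) : ∃ g : DihedralGroup 0, g • x ∈ Set.Icc (-1 : ℝ) 1 := by
  set n := ⌊(x + 1) / 4⌋
  have h₁ : (n : ℝ) ≤ (x + 1) / 4 := Int.floor_le _
  have h₂ : (x + 1) / 4 < n + 1 := Int.lt_floor_add_one _
  rcases le_or_gt (x - 4 * n) 1 with h | h
  · exact ⟨r (-n), by simp only [r_smul, Set.mem_Icc]; push_cast; constructor <;> linarith⟩
  · exact ⟨sr (-n), by simp only [sr_smul, Set.mem_Icc]; push_cast; constructor <;> linarith⟩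

lemma eq_one_of_smul_mem_Ioo {g : DihedralGroup 0} {x : ℝ} (hx : x ∈ Set.Ioo (-1 : ℝ) 1)
    (hgx : g • x ∈ Set.Ioo (-1 : ℝ) 1) : g = 1 := by
  obtain ⟨hx₁, hx₂⟩ := hx
  cases g using intCases with
  | r i =>
    simp only [r_smul, Set.mem_Ioo] at hgx
    have h₁ : i < 1 := by exact_mod_cast (show (i : ℝ) < 1 by linarith)
    have h₂ : -1 < i := by exact_mod_cast (show (-1 : ℝ) < i by linarith)
    have : i = 0 := by omega
    rw [this, one_def]; rfl
  | sr i =>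
    simp only [sr_smul, Set.mem_Ioo] at hgx
    have h₁ : i < 1 := by exact_mod_cast (show (i : ℝ) < 1 by linarith)
    have h₂ : 0 < i := by exact_mod_cast (show (0 : ℝ) < i by linarith)
    omega

lemma isFundamentalDomain_Ioo : IsFundamentalDomain (DihedralGroup 0) (Set.Ioo (-1 : ℝ) 1) := by
  refine .mk'' measurableSet_Ioo.nullMeasurableSet ?_ ?_ fun g =>
    (measurePreserving_smul g volume).quasiMeasurePreserving
  · have hnull : ∀ᵐ x : ℝ, ∀ g : DihedralGroup 0, g • x ∉ ({-1, 1} : Set ℝ) := by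
      refine ae_all_iff.2 fun g => (measure_eq_zero_iff_ae_notMem (s := (g • ·) ⁻¹' {-1, 1})).1 ?_
      rw [measure_preimage_smul, (Set.toFinite _).measure_zero]
    filter_upwards [hnull] with x hx
    obtain ⟨g, hg⟩ := exists_smul_mem_Icc x
    exact ⟨g, Set.Icc_sdiff_both (a := (-1 : ℝ)) (b := 1) ▸ ⟨hg, hx g⟩⟩
  · refine fun g hg => Disjoint.aedisjoint <| Set.disjoint_left.2 fun x hgx hx => hg ?_
    rw [Set.mem_smul_set_iff_inv_smul_mem] at hgx
    exact eq_one_of_smul_mem_Ioo hgx (by rwa [smul_inv_smul])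

end DihedralGroup

@[fun_prop]
lemma continuous_G (t : ℝ) : Continuous fun p : ℝ × ℝ => G t p.1 p.2 := by
  unfold G; fun_prop

lemma G_smul_smul (t : ℝ) (g : DihedralGroup 0) (a b : ℝ) : G t (g • a) (g • b) = G t a b := by
  rw [G, G, ← sq_abs, DihedralGroup.abs_smul_sub_smul, sq_abs]

noncomputable def imageKernel (t x y : ℝ) : ℝ≥0∞ :=
  ∑' g : DihedralGroup 0, ENNReal.ofReal (G t x (g • y))

@[fun_prop]
lemma measurable_imageKernel (t : ℝ) : Measurable fun p : ℝ × ℝ => imageKernel t p.1 p.2 :=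
  Measurable.tsum fun g => by fun_prop

lemma imageKernel_smul_left (t : ℝ) (g : DihedralGroup 0) (x y : ℝ) :
    imageKernel t (g • x) y = imageKernel t x y := by
  rw [imageKernel, imageKernel, ← (Equiv.mulLeft g).tsum_eq]
  simp only [Equiv.coe_mulLeft, mul_smul, G_smul_smul]

lemma lintegral_G_mul_imageKernel {t s : ℝ} (ht : 0 < t) (hs : 0 < s) (x z : ℝ) :
    ∫⁻ u, ENNReal.ofReal (G t x u) * imageKernel s u z = imageKernel (t + s) x z := by
  simp_rw [imageKernel, ← ENNReal.tsum_mul_left]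
  rw [lintegral_tsum fun g => ?_]
  · exact tsum_congr fun g => lintegral_G_mul_G ht hs x (g • z)
  · fun_prop

lemma setLIntegral_imageKernel_mul (t s x z : ℝ) :
    ∫⁻ y in Set.Ioo (-1) 1, imageKernel t x y * imageKernel s y z =
      ∫⁻ u, ENNReal.ofReal (G t x u) * imageKernel s u z := by
  have hsum (y : ℝ) : imageKernel t x y * imageKernel s y z =
      ∑' g : DihedralGroup 0, ENNReal.ofReal (G t x (g • y)) * imageKernel s (g • y) z := by
    simp only [imageKernel_smul_left, ENNReal.tsum_mul_right]
    rfl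
  simp_rw [hsum]
  rw [DihedralGroup.isFundamentalDomain_Ioo.lintegral_eq_tsum'', lintegral_tsum fun g => ?_]
  fun_prop

theorem imageKernel_chapmanKolmogorov {t s : ℝ} (ht : 0 < t) (hs : 0 < s) (x z : ℝ) :
    ∫⁻ y in Set.Ioo (-1) 1, imageKernel t x y * imageKernel s y z = imageKernel (t + s) x z := by
  rw [setLIntegral_imageKernel_mul, lintegral_G_mul_imageKernel ht hs]

lemma P_nonneg (t x y : ℝ) : 0 ≤ P t x y := by
  unfold P
  split_ifs
  · exact tsum_nonneg fun n => mul_nonneg zero_le_two (G_nonneg _ _ _)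
  · exact tsum_nonneg fun n => add_nonneg (G_nonneg _ _ _) (G_nonneg _ _ _)

lemma P_eq_tsum {t : ℝ} (ht : 0 < t) (x y : ℝ) :
    P t x y = ∑' n : ℤ, (G t x (y + 4 * n) + G t x (2 - y + 4 * n)) := by
  rw [P, ite_eq_right_iff]
  intro hy
  have hreflect : ∑' n : ℤ, G t x (2 - y + 4 * n) = ∑' n : ℤ, G t x (y + 4 * n) := by
    rcases hy with rfl | rfl
    · norm_num
    · rw [← (Equiv.addRight (1 : ℤ)).tsum_eq fun n : ℤ => G t x (-1 + 4 * n)]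
      refine tsum_congr fun n => congrArg (G t x) ?_
      rw [Equiv.coe_addRight, Int.cast_add, Int.cast_one]
      ring
  rw [tsum_mul_left, Summable.tsum_add (summable_G_add_four_mul ht x y)
    (summable_G_add_four_mul ht x (2 - y)), hreflect, two_mul]

lemma ofReal_P {t : ℝ} (ht : 0 < t) (x y : ℝ) : ENNReal.ofReal (P t x y) = imageKernel t x y := by
  rw [P_eq_tsum ht, ENNReal.ofReal_tsum_of_nonneg (fun n => add_nonneg (G_nonneg _ _ _)
    (G_nonneg _ _ _)) ((summable_G_add_four_mul ht x y).add (summable_G_add_four_mul ht x (2 - y)))]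
  simp_rw [ENNReal.ofReal_add (G_nonneg _ _ _) (G_nonneg _ _ _)]
  rw [ENNReal.tsum_add, imageKernel, DihedralGroup.tsum_eq_tsum_r_add_tsum_sr]
  congr 1
  rw [← (Equiv.neg ℤ).tsum_eq]
  simp only [DihedralGroup.sr_smul, Equiv.neg_apply, Int.cast_neg]
  congr! 4
  ring

theorem neumann_kernel_chapman_kolmogorov_general (s t : ℝ) (hs : 0 < s) (ht : 0 < t)
    (r : ℝ) (r' : ℝ) :
    ∫ y in (-1 : ℝ)..1, P t r y * P s y r' = P (t + s) r r' := by
  have hP {τ : ℝ} (hτ : 0 < τ) (x y : ℝ) : P τ x y = (imageKernel τ x y).toReal := by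
    rw [← ofReal_P hτ, ENNReal.toReal_ofReal (P_nonneg τ x y)]
  have hfinite {τ : ℝ} (hτ : 0 < τ) (x y : ℝ) : imageKernel τ x y < ⊤ :=
    ofReal_P hτ x y ▸ ENNReal.ofReal_lt_top
  simp_rw [hP ht, hP hs, hP (add_pos ht hs), ← ENNReal.toReal_mul]
  rw [intervalIntegral.integral_of_le (by norm_num), integral_Ioc_eq_integral_Ioo,
    integral_toReal (by fun_prop)
      (ae_of_all _ fun y => ENNReal.mul_lt_top (hfinite ht r y) (hfinite hs y r')),
    imageKernel_chapmanKolmogorov ht hs]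

/-- Chapman–Kolmogorov identity for the Neumann heat kernel:
`∫_{−1}^{1} P_t(r,y)·P_s(y,r') dy = P_{t+s}(r,r')`. -/
theorem neumann_kernel_chapman_kolmogorov (s t : ℝ) (hs : 0 < s) (ht : 0 < t)
    (r : ℝ) (hr : r ∈ Set.Icc (-1 : ℝ) 1)
    (r' : ℝ) (hr' : r' ∈ Set.Ioo (-1 : ℝ) 1) :
    ∫ y in (-1 : ℝ)..1, P t r y * P s y r' = P (t + s) r r' :=
  neumann_kernel_chapman_kolmogorov_general s t hs ht r r'
end

section
/- For every T > 0 there exists a constant c > 0 such that for all s ∈ (0, T], all r ∈ [−1,1] and all y ∈ [0, 1), |P_s(r, y) − P_s(r, 1)| ≤ c·(1−y)/s^{3/2}. -/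
open MeasureTheory

/-- `exp` comparison with weight. -/
lemma exp_neg_sub_le' {u v : ℝ} (h : u ≤ v) :
    Real.exp (-u) - Real.exp (-v) ≤ (v - u) * Real.exp (-u) := by
  have hv : Real.exp (-v) = Real.exp (-u) * Real.exp (-(v - u)) := by
    rw [← Real.exp_add]; ring_nf
  have h1 : 1 - (v - u) ≤ Real.exp (-(v - u)) := by
    have := Real.add_one_le_exp (-(v - u)); linarith
  nlinarith [Real.exp_pos (-u)]

lemma abs_exp_aux {u v : ℝ} (h : u ≤ v) :
    |Real.exp (-u) - Real.exp (-v)| ≤ |u - v| * Real.exp (-(min u v)) := by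
  rw [min_eq_left h]
  have h1 : Real.exp (-v) ≤ Real.exp (-u) := Real.exp_le_exp.2 (by linarith)
  rw [abs_of_nonneg (by linarith), abs_of_nonpos (by linarith : u - v ≤ 0)]
  have := exp_neg_sub_le' h
  have h2 : -(u - v) = v - u := by ring
  rw [h2]; exact this

lemma abs_exp_neg_sub (u v : ℝ) :
    |Real.exp (-u) - Real.exp (-v)| ≤ |u - v| * Real.exp (-(min u v)) := by
  rcases le_total u v with h | h
  · exact abs_exp_aux h
  · rw [abs_sub_comm, abs_sub_comm u v, min_comm]
    exact abs_exp_aux h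

/-- Distance lower bound: for `|r| ≤ 1`, `w ∈ [0,2]`, `|r - (w+4n)| ≥ |n|`. -/
lemma dist_ge (r w : ℝ) (hr : |r| ≤ 1) (hw0 : 0 ≤ w) (hw2 : w ≤ 2) (n : ℤ) :
    ((n.natAbs : ℝ)) ^ 2 ≤ (r - (w + 4 * n)) ^ 2 := by
  have hcast : ((n.natAbs : ℝ)) = |(n : ℝ)| := by
    rw [Nat.cast_natAbs]; push_cast; ring
  rcases eq_or_ne n 0 with rfl | hn
  · simp; positivity
  · have h1 : (1 : ℝ) ≤ |(n : ℝ)| := by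
      have : (1 : ℤ) ≤ |n| := Int.one_le_abs hn
      calc (1:ℝ) ≤ (|n| : ℤ) := by exact_mod_cast this
        _ = |(n:ℝ)| := by push_cast; ring
    have habs : |r| ≤ 1 := hr
    have h2 : |(n:ℝ)| ≤ |r - (w + 4 * n)| := by
      have h3 : |(4:ℝ) * n| - |r - w| ≤ |r - (w + 4 * n)| := by
        have h := abs_sub_abs_le_abs_sub ((4:ℝ) * n) (r - w)
        have he : (4:ℝ) * n - (r - w) = -(r - (w + 4*n)) := by ring
        rw [he, abs_neg] at h
        have hrw : |r - w| = |(r : ℝ) - w| := rfl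
        linarith
      have h4 : |(4:ℝ) * n| = 4 * |(n:ℝ)| := by rw [abs_mul]; norm_num
      have h5 : |r - w| ≤ 3 := by
        rw [abs_le] at hr ⊢; constructor <;> linarith [hr.1, hr.2]
      rw [h4] at h3
      linarith
    calc ((n.natAbs : ℝ)) ^ 2 = |(n:ℝ)| ^ 2 := by rw [hcast]
      _ ≤ |r - (w + 4*n)| ^ 2 := by
          apply pow_le_pow_left₀ (abs_nonneg _) (le_trans h2 le_rfl)
      _ = (r - (w + 4*n)) ^ 2 := sq_abs _

/-- Exponential decay bound for the Gaussian terms. -/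
lemma exp_bound (T s r w : ℝ) (hs : 0 < s) (hsT : s ≤ T)
    (hr : |r| ≤ 1) (hw0 : 0 ≤ w) (hw2 : w ≤ 2) (n : ℤ) :
    Real.exp (-((r - (w + 4 * n)) ^ 2 / (2 * s))) ≤
      Real.exp (-(1 / (2 * T))) ^ n.natAbs := by
  have hT : 0 < T := lt_of_lt_of_le hs hsT
  have hd := dist_ge r w hr hw0 hw2 n
  set k : ℕ := n.natAbs with hk
  have hkk : (k : ℝ) ≤ (k : ℝ) ^ 2 := by
    rcases Nat.eq_zero_or_pos k with h | h
    · simp [h]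
    · have h1 : (1 : ℝ) ≤ (k : ℝ) := by exact_mod_cast h
      nlinarith
  have h1 : (k : ℝ) * (1 / (2 * T)) ≤ (r - (w + 4 * n)) ^ 2 / (2 * s) := by
    have e1 : (k : ℝ) * (1 / (2 * T)) = (k : ℝ) / (2 * T) := by ring
    rw [e1]
    calc (k : ℝ) / (2 * T) ≤ (k : ℝ) ^ 2 / (2 * s) := by
          rw [div_le_div_iff₀ (by positivity) (by positivity)]
          have hA : (k : ℝ) * (2 * s) ≤ (k : ℝ) * (2 * T) := by
            have := Nat.cast_nonneg (α := ℝ) k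
            nlinarith
          have hB : (k : ℝ) * (2 * T) ≤ (k : ℝ) ^ 2 * (2 * T) := by nlinarith
          linarith
      _ ≤ (r - (w + 4 * n)) ^ 2 / (2 * s) := by gcongr
  calc Real.exp (-((r - (w + 4 * n)) ^ 2 / (2 * s)))
      ≤ Real.exp (-((k : ℝ) * (1 / (2 * T)))) := Real.exp_le_exp.2 (by linarith)
    _ = Real.exp (-(1 / (2 * T))) ^ k := by rw [← Real.exp_nat_mul]; congr 1; ring

/-- The master summable series. -/
lemma summable_master {q : ℝ} (hq0 : 0 ≤ q) (hq1 : q < 1) :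
    Summable (fun n : ℤ => (8 * (n.natAbs : ℝ) + 5) * q ^ n.natAbs) := by
  have hnat : Summable (fun k : ℕ => (8 * (k : ℝ) + 5) * q ^ k) := by
    have h1 : Summable (fun k : ℕ => (k : ℝ) * q ^ k) := by
      have := summable_pow_mul_geometric_of_norm_lt_one 1
        (r := q) (by rwa [Real.norm_eq_abs, abs_of_nonneg hq0])
      simpa using this
    have h2 : Summable (fun k : ℕ => q ^ k) := summable_geometric_of_lt_one hq0 hq1
    refine ((h1.mul_left 8).add (h2.mul_left 5)).congr fun k => ?_
    ring
  apply Summable.of_nat_of_neg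
  · simpa using hnat
  · simpa using hnat

/-- Summability of the reflected Gaussian series. -/
lemma summable_G (s r w : ℝ) (hs : 0 < s) (hr : |r| ≤ 1) (hw0 : 0 ≤ w) (hw2 : w ≤ 2) :
    Summable (fun n : ℤ => G s r (w + 4 * n)) := by
  have hq0 : 0 ≤ Real.exp (-(1 / (2 * s))) := Real.exp_nonneg _
  have hq1 : Real.exp (-(1 / (2 * s))) < 1 := by
    have h : (0 : ℝ) < 1 / (2 * s) := by positivity
    have := Real.exp_lt_exp.2 (show -(1 / (2 * s)) < 0 by linarith)
    simpa using this
  have hsq : 0 < Real.sqrt (2 * Real.pi * s) := Real.sqrt_pos.2 (by positivity)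
  refine Summable.of_nonneg_of_le (fun n => ?_) (fun n => ?_)
    ((summable_master hq0 hq1).mul_left (1 / Real.sqrt (2 * Real.pi * s)))
  · rw [G]; positivity
  · rw [G, neg_div, one_div_mul_eq_div]
    have hb := exp_bound s s r w hs le_rfl hr hw0 hw2 n
    have hb2 : Real.exp (-((r - (w + 4 * n)) ^ 2 / (2 * s))) ≤
        (8 * (n.natAbs : ℝ) + 5) * Real.exp (-(1 / (2 * s))) ^ n.natAbs := by
      refine hb.trans ?_
      refine le_mul_of_one_le_left (pow_nonneg hq0 _) ?_
      have := Nat.cast_nonneg (α := ℝ) n.natAbs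
      linarith
    gcongr

/-- Per-term Lipschitz bound. -/
lemma G_term_bound (T s r w : ℝ) (hs : 0 < s) (hsT : s ≤ T)
    (hr : |r| ≤ 1) (hw0 : 0 ≤ w) (hw2 : w ≤ 2) (n : ℤ) :
    |G s r (w + 4 * n) - G s r (1 + 4 * n)| ≤
      |w - 1| * ((8 * (n.natAbs : ℝ) + 5) * Real.exp (-(1 / (2 * T))) ^ n.natAbs)
        / (2 * s * Real.sqrt (2 * Real.pi * s)) := by
  have hT : 0 < T := lt_of_lt_of_le hs hsT
  have hsq : 0 < Real.sqrt (2 * Real.pi * s) := Real.sqrt_pos.2 (by positivity)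
  set k : ℕ := n.natAbs with hk
  set u : ℝ := (r - (w + 4 * n)) ^ 2 / (2 * s) with hu
  set v : ℝ := (r - (1 + 4 * n)) ^ 2 / (2 * s) with hv
  have hGu : G s r (w + 4 * n) = Real.exp (-u) / Real.sqrt (2 * Real.pi * s) := by
    rw [G, hu, neg_div]
  have hGv : G s r (1 + 4 * n) = Real.exp (-v) / Real.sqrt (2 * Real.pi * s) := by
    rw [G, hv, neg_div]
  have key : |Real.exp (-u) - Real.exp (-v)| ≤
      |w - 1| * ((8 * (k : ℝ) + 5) * Real.exp (-(1 / (2 * T))) ^ k) / (2 * s) := by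
    refine (abs_exp_neg_sub u v).trans ?_
    have h1 : |u - v| ≤ |w - 1| * (8 * (k : ℝ) + 5) / (2 * s) := by
      have hdiff : u - v = ((1 - w) * (2 * r - w - 1 - 8 * n)) / (2 * s) := by
        rw [hu, hv, div_sub_div_same]
        congr 1
        ring
      rw [hdiff, abs_div, abs_of_pos (by positivity : (0:ℝ) < 2 * s), abs_mul]
      have e1 : |1 - w| = |w - 1| := abs_sub_comm 1 w
      rw [e1]
      have hkc : (k : ℝ) = |(n : ℝ)| := by
        rw [hk, Nat.cast_natAbs]; push_cast; ring
      have hr' := abs_le.1 hr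
      have h5 : |2 * r - w - 1 - 8 * (n : ℝ)| ≤ 8 * (k : ℝ) + 5 := by
        rw [abs_le, hkc]
        have ha := le_abs_self (n : ℝ)
        have hb := neg_abs_le (n : ℝ)
        constructor <;> nlinarith
      gcongr
    have h2 : Real.exp (-(min u v)) ≤ Real.exp (-(1 / (2 * T))) ^ k := by
      rcases le_total u v with h | h
      · rw [min_eq_left h, hu]
        exact exp_bound T s r w hs hsT hr hw0 hw2 n
      · rw [min_eq_right h, hv]
        exact exp_bound T s r 1 hs hsT hr (by norm_num) (by norm_num) n
    calc |u - v| * Real.exp (-(min u v))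
        ≤ (|w - 1| * (8 * (k : ℝ) + 5) / (2 * s)) * (Real.exp (-(1 / (2 * T))) ^ k) :=
          mul_le_mul h1 h2 (Real.exp_nonneg _) (by positivity)
      _ = |w - 1| * ((8 * (k : ℝ) + 5) * Real.exp (-(1 / (2 * T))) ^ k) / (2 * s) := by
          ring
  calc |G s r (w + 4 * n) - G s r (1 + 4 * n)|
      = |Real.exp (-u) - Real.exp (-v)| / Real.sqrt (2 * Real.pi * s) := by
        rw [hGu, hGv, div_sub_div_same, abs_div, abs_of_pos hsq]
    _ ≤ (|w - 1| * ((8 * (k : ℝ) + 5) * Real.exp (-(1 / (2 * T))) ^ k) / (2 * s))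
          / Real.sqrt (2 * Real.pi * s) := by gcongr
    _ = |w - 1| * ((8 * (k : ℝ) + 5) * Real.exp (-(1 / (2 * T))) ^ k)
          / (2 * s * Real.sqrt (2 * Real.pi * s)) := by
        rw [div_div]

/-- Hölder-type bound near the boundary: for every `T > 0` there is `c > 0` with
`|P_s(r,y) − P_s(r,1)| ≤ c·(1−y)/√(s³)` for all `s ∈ (0,T]`, `r ∈ [−1,1]`,
`y ∈ [0,1)`. -/
theorem neumann_kernel_boundary_lipschitz (T : ℝ) (hT : 0 < T) :
    ∃ c : ℝ, 0 < c ∧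
      ∀ s ∈ Set.Ioc (0 : ℝ) T, ∀ r ∈ Set.Icc (-1 : ℝ) 1, ∀ y ∈ Set.Ico (0 : ℝ) 1,
        |P s r y - P s r 1| ≤ c * (1 - y) / Real.sqrt (s ^ 3) := by
  set q : ℝ := Real.exp (-(1 / (2 * T))) with hqdef
  have hq0 : 0 ≤ q := Real.exp_nonneg _
  have hq1 : q < 1 := by
    have h : (0 : ℝ) < 1 / (2 * T) := by positivity
    have := Real.exp_lt_exp.2 (show -(1 / (2 * T)) < 0 by linarith)
    simpa [hqdef] using this
  have hM : Summable (fun n : ℤ => (8 * (n.natAbs : ℝ) + 5) * q ^ n.natAbs) :=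
    summable_master hq0 hq1
  set M : ℝ := ∑' n : ℤ, (8 * (n.natAbs : ℝ) + 5) * q ^ n.natAbs with hMdef
  have hMpos : 0 < M := by
    refine Summable.tsum_pos hM (fun n => by positivity) 0 ?_
    norm_num
  refine ⟨M, hMpos, ?_⟩
  rintro s ⟨hs0, hsT⟩ r ⟨hr1, hr2⟩ y ⟨hy0, hy1⟩
  have hr : |r| ≤ 1 := abs_le.2 ⟨hr1, hr2⟩
  have hsq : 0 < Real.sqrt (2 * Real.pi * s) := Real.sqrt_pos.2 (by positivity)
  have hPy : P s r y = ∑' n : ℤ, (G s r (y + 4 * n) + G s r (2 - y + 4 * n)) := by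
    rw [P, if_neg]
    push_neg
    exact ⟨by linarith, by linarith⟩
  have hP1 : P s r 1 = ∑' n : ℤ, 2 * G s r (1 + 4 * n) := by
    rw [P, if_pos (Or.inl rfl)]
  have hA : Summable (fun n : ℤ => G s r (y + 4 * n)) :=
    summable_G s r y hs0 hr hy0 (by linarith)
  have hB : Summable (fun n : ℤ => G s r (2 - y + 4 * n)) :=
    summable_G s r (2 - y) hs0 hr (by linarith) (by linarith)
  have hC : Summable (fun n : ℤ => G s r (1 + 4 * n)) :=
    summable_G s r 1 hs0 hr (by norm_num) (by norm_num)
  have hdiff : P s r y - P s r 1 =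
      ∑' n : ℤ, ((G s r (y + 4 * n) - G s r (1 + 4 * n)) +
        (G s r (2 - y + 4 * n) - G s r (1 + 4 * n))) := by
    rw [hPy, hP1, ← Summable.tsum_sub (hA.add hB) (hC.mul_left 2)]
    exact tsum_congr fun n => by ring
  have hterm : ∀ n : ℤ,
      |(G s r (y + 4 * n) - G s r (1 + 4 * n)) +
        (G s r (2 - y + 4 * n) - G s r (1 + 4 * n))| ≤
      ((8 * (n.natAbs : ℝ) + 5) * q ^ n.natAbs) *
        ((1 - y) / (s * Real.sqrt (2 * Real.pi * s))) := by
    intro n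
    have h1 := G_term_bound T s r y hs0 hsT hr hy0 (by linarith) n
    have h2 := G_term_bound T s r (2 - y) hs0 hsT hr (by linarith) (by linarith) n
    have e1 : |y - 1| = 1 - y := by rw [abs_of_nonpos (by linarith)]; ring
    have e2 : |(2 - y) - 1| = 1 - y := by rw [abs_of_nonneg (by linarith)]; ring
    rw [e1] at h1
    rw [e2] at h2
    have hsne : s ≠ 0 := ne_of_gt hs0
    have hRne : Real.sqrt (2 * Real.pi * s) ≠ 0 := ne_of_gt hsq
    calc |(G s r (y + 4 * n) - G s r (1 + 4 * n)) +
          (G s r (2 - y + 4 * n) - G s r (1 + 4 * n))|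
        ≤ |G s r (y + 4 * n) - G s r (1 + 4 * n)| +
          |G s r (2 - y + 4 * n) - G s r (1 + 4 * n)| := abs_add_le _ _
      _ ≤ (1 - y) * ((8 * (n.natAbs : ℝ) + 5) * q ^ n.natAbs)
            / (2 * s * Real.sqrt (2 * Real.pi * s)) +
          (1 - y) * ((8 * (n.natAbs : ℝ) + 5) * q ^ n.natAbs)
            / (2 * s * Real.sqrt (2 * Real.pi * s)) := add_le_add h1 h2
      _ = ((8 * (n.natAbs : ℝ) + 5) * q ^ n.natAbs) *
            ((1 - y) / (s * Real.sqrt (2 * Real.pi * s))) := by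
          field_simp
          ring
  have hbound : Summable (fun n : ℤ => ((8 * (n.natAbs : ℝ) + 5) * q ^ n.natAbs) *
      ((1 - y) / (s * Real.sqrt (2 * Real.pi * s)))) := hM.mul_right _
  have habs : Summable (fun n : ℤ =>
      |(G s r (y + 4 * n) - G s r (1 + 4 * n)) +
        (G s r (2 - y + 4 * n) - G s r (1 + 4 * n))|) :=
    Summable.of_nonneg_of_le (fun n => abs_nonneg _) hterm hbound
  have hS : Real.sqrt (s ^ 3) ≤ s * Real.sqrt (2 * Real.pi * s) := by
    have h1 : Real.sqrt (s ^ 3) = s * Real.sqrt s := by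
      rw [show s ^ 3 = s ^ 2 * s by ring, Real.sqrt_mul (sq_nonneg s), Real.sqrt_sq hs0.le]
    rw [h1]
    have h2 : Real.sqrt s ≤ Real.sqrt (2 * Real.pi * s) :=
      Real.sqrt_le_sqrt (by nlinarith [Real.pi_gt_three])
    exact mul_le_mul_of_nonneg_left h2 hs0.le
  have hS0 : 0 < Real.sqrt (s ^ 3) := Real.sqrt_pos.2 (by positivity)
  rw [hdiff]
  calc |∑' n : ℤ, ((G s r (y + 4 * n) - G s r (1 + 4 * n)) +
        (G s r (2 - y + 4 * n) - G s r (1 + 4 * n)))|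
      ≤ ∑' n : ℤ, |(G s r (y + 4 * n) - G s r (1 + 4 * n)) +
        (G s r (2 - y + 4 * n) - G s r (1 + 4 * n))| := by
        have := norm_tsum_le_tsum_norm (f := fun n : ℤ =>
          (G s r (y + 4 * n) - G s r (1 + 4 * n)) +
          (G s r (2 - y + 4 * n) - G s r (1 + 4 * n))) (by simpa using habs)
        simpa using this
    _ ≤ ∑' n : ℤ, ((8 * (n.natAbs : ℝ) + 5) * q ^ n.natAbs) *
          ((1 - y) / (s * Real.sqrt (2 * Real.pi * s))) :=
        Summable.tsum_le_tsum hterm habs hbound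
    _ = M * ((1 - y) / (s * Real.sqrt (2 * Real.pi * s))) := by
        rw [tsum_mul_right, ← hMdef]
    _ = M * (1 - y) / (s * Real.sqrt (2 * Real.pi * s)) := by ring
    _ ≤ M * (1 - y) / Real.sqrt (s ^ 3) := by
        have hnum : 0 ≤ M * (1 - y) := by nlinarith
        exact div_le_div_of_nonneg_left hnum hS0 hS
end

section
/- For every r ∈ [−1,1], the function t ↦ ∫_{−1}^{1} P_t(r, r′)·r′ dr′ is differentiable on (0,∞), and its derivative equals (1/2)·(P_t(r, −1) − P_t(r, 1)) for every t > 0. -/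
open MeasureTheory

/-! The image sum `∑ₙ [G(x + 4n) + G(2 - x + 4n)]` solves the heat equation `∂ₜ = ½ ∂ₓ²`, so
each term of `∫₋₁¹ P_t(r, x) x dx` has `t`-derivative `½ [∂ₓ(image term) · x - (image term)]₋₁¹`
(integrate by parts twice). Each reflected pair is symmetric about `x = 1`, so its flux vanishes
there, while the fluxes at `x = -1` of consecutive `n` cancel telescopically. What survives is
`∑ₙ G(-1 + 4n) - G(1 + 4n) = ½ (P_t(r, -1) - P_t(r, 1))`. Gaussian decay in `n`, uniform for
`τ` near `t`, justifies exchanging the sum with the integral and with `d/dt`. -/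

open Set Real

open Metric in
lemma hasDerivAt_intervalIntegral_of_continuousOn {F F' : ℝ → ℝ → ℝ} {a b t₀ ε : ℝ}
    (hε : 0 < ε) (hF : ∀ τ ∈ ball t₀ ε, Continuous (F τ))
    (hF' : ContinuousOn (Function.uncurry F') (closedBall t₀ ε ×ˢ uIcc a b))
    (hdiff : ∀ τ ∈ ball t₀ ε, ∀ x, HasDerivAt (F · x) (F' τ x) τ) :
    HasDerivAt (fun τ => ∫ x in a..b, F τ x) (∫ x in a..b, F' t₀ x) t₀ := by
  obtain ⟨M, hM⟩ :=
    ((isCompact_closedBall t₀ ε).prod isCompact_uIcc).exists_bound_of_continuousOn hF'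
  have hF't₀ : ContinuousOn (F' t₀) (uIcc a b) :=
    hF'.comp (continuousOn_const.prodMk continuousOn_id)
      fun x hx => ⟨mem_closedBall_self hε.le, hx⟩
  refine (intervalIntegral.hasDerivAt_integral_of_dominated_loc_of_deriv_le
    (bound := fun _ => M) (ball_mem_nhds t₀ hε)
    (Filter.eventually_of_mem (ball_mem_nhds t₀ hε) fun τ hτ => (hF τ hτ).aestronglyMeasurable)
    ((hF t₀ (mem_ball_self hε)).intervalIntegrable a b)
    ((hF't₀.mono uIoc_subset_uIcc).aestronglyMeasurable measurableSet_uIoc)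
    (Filter.Eventually.of_forall fun x hx τ hτ =>
      hM (τ, x) ⟨ball_subset_closedBall hτ, uIoc_subset_uIcc hx⟩)
    intervalIntegrable_const
    (Filter.Eventually.of_forall fun x _ τ hτ => hdiff τ hτ x)).2

lemma integral_mul_id_eq_of_hasDerivAt {u v w : ℝ → ℝ} {a b : ℝ}
    (hu : ∀ x, HasDerivAt u (v x) x) (hv : ∀ x, HasDerivAt v (w x) x)
    (hw : IntervalIntegrable w volume a b) :
    ∫ x in a..b, w x * x = (v b * b - u b) - (v a * a - u a) := by
  refine intervalIntegral.integral_eq_sub_of_hasDerivAt (fun x _ =>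
    (((hv x).mul (hasDerivAt_id' x)).sub (hu x)).congr_deriv (by ring)) ?_
  exact hw.mul_continuousOn continuousOn_id

lemma tsum_sub_int_add_one_eq_zero {w : ℤ → ℝ} (hw : Summable w) :
    ∑' n, (w n - w (n + 1)) = 0 := by
  have hshift : Summable fun n => w (n + 1) := (Equiv.addRight (1 : ℤ)).summable_iff.mpr hw
  rw [hw.tsum_sub hshift, sub_eq_zero]
  exact ((Equiv.addRight (1 : ℤ)).tsum_eq w).symm

noncomputable def spaceDerivG (t r s : ℝ) : ℝ := (r - s) / t * G t r s

noncomputable def timeDerivG (t r s : ℝ) : ℝ :=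
  G t r s * ((r - s) ^ 2 / (2 * t ^ 2) - 1 / (2 * t))

lemma G_nonneg_s7 (t r s : ℝ) : 0 ≤ G t r s := by
  unfold G; positivity

@[fun_prop]
lemma continuous_G_s7 (t r : ℝ) : Continuous (G t r) := by
  unfold G; fun_prop

lemma hasDerivAt_G_space (t r s : ℝ) : HasDerivAt (G t r) (spaceDerivG t r s) s := by
  have h : HasDerivAt (fun s' => -(r - s') ^ 2 / (2 * t)) ((r - s) / t) s := by
    refine ((((hasDerivAt_id' s).const_sub r).pow 2).neg.div_const (2 * t)).congr_deriv ?_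
    rcases eq_or_ne t 0 with rfl | ht
    · simp
    · field_simp; ring
  refine (((Real.hasDerivAt_exp _).comp s h).div_const (√(2 * π * t))).congr_deriv ?_
  unfold spaceDerivG G; ring

lemma hasDerivAt_spaceDerivG (t r s : ℝ) :
    HasDerivAt (spaceDerivG t r) (2 * timeDerivG t r s) s := by
  refine ((((hasDerivAt_id' s).const_sub r).div_const t).mul
    (hasDerivAt_G_space t r s)).congr_deriv ?_
  unfold timeDerivG spaceDerivG
  rcases eq_or_ne t 0 with rfl | ht
  · simp
  · field_simp; ring

lemma hasDerivAt_G_time {t : ℝ} (ht : 0 < t) (r s : ℝ) :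
    HasDerivAt (fun τ => G τ r s) (timeDerivG t r s) t := by
  have hexp : HasDerivAt (fun τ => exp (-(r - s) ^ 2 / (2 * τ)))
      (exp (-(r - s) ^ 2 / (2 * t)) * ((r - s) ^ 2 / (2 * t ^ 2))) t := by
    refine (Real.hasDerivAt_exp _).comp t ?_
    refine ((hasDerivAt_const t (-(r - s) ^ 2)).div ((hasDerivAt_id' t).const_mul 2)
      (by positivity)).congr_deriv ?_
    field_simp
    ring
  have hsqrt : HasDerivAt (fun τ => √(2 * π * τ)) (π / √(2 * π * t)) t := by
    refine (((hasDerivAt_id' t).const_mul (2 * π)).sqrt (by positivity)).congr_deriv ?_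
    field_simp
  refine (hexp.div hsqrt (by positivity)).congr_deriv ?_
  have hsq : √(2 * π * t) ^ 2 = 2 * π * t := Real.sq_sqrt (by positivity)
  unfold timeDerivG G
  set S := √(2 * π * t)
  have hS : 0 < S := Real.sqrt_pos.mpr (by positivity)
  field_simp
  linear_combination t * hsq

lemma G_le_of_mem_Icc {t τ : ℝ} (ht : 0 < t) (hτ : τ ∈ Icc (t / 2) (2 * t)) (r s : ℝ) :
    G τ r s ≤ exp (-(r - s) ^ 2 / (4 * t)) / √(π * t) := by
  have hτ0 : 0 < τ := by linarith [hτ.1]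
  unfold G
  refine div_le_div₀ (by positivity) (exp_le_exp.mpr ?_) (by positivity)
    (Real.sqrt_le_sqrt (by nlinarith [hτ.1, Real.pi_pos]))
  rw [neg_div, neg_div, neg_le_neg_iff]
  exact div_le_div_of_nonneg_left (sq_nonneg _) (by positivity) (by linarith [hτ.2])

lemma summable_one_add_abs_mul_pow_natAbs {q : ℝ} (hq0 : 0 ≤ q) (hq1 : q < 1) :
    Summable (fun n : ℤ => (1 + |(n : ℝ)|) * q ^ n.natAbs) := by
  have h : Summable (fun n : ℕ => (1 + (n : ℝ)) * q ^ n) := by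
    have hq : ‖q‖ < 1 := by rwa [Real.norm_eq_abs, abs_of_nonneg hq0]
    simpa [add_mul] using (summable_geometric_of_lt_one hq0 hq1).add
      (summable_pow_mul_geometric_of_norm_lt_one 1 hq)
  exact .of_nat_of_neg (by simpa using h) (by simpa using h)

lemma abs_sub_le_and_le_sq {r j : ℝ} (hr : |r| ≤ 1) (hj : |j| ≤ 3) (n : ℤ) :
    |r - (j + 4 * n)| ≤ 4 * (1 + |(n : ℝ)|) ∧ 8 * |(n : ℝ)| - 9 ≤ (r - (j + 4 * n)) ^ 2 := by
  have h4n : |4 * (n : ℝ)| = 4 * |(n : ℝ)| := by rw [abs_mul]; norm_num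
  have hlo : 4 * |(n : ℝ)| - 4 ≤ |r - (j + 4 * n)| := by
    have := abs_sub_abs_le_abs_sub (4 * (n : ℝ)) (r - j)
    rw [show 4 * (n : ℝ) - (r - j) = -(r - (j + 4 * n)) by ring, abs_neg] at this
    linarith [abs_sub r j]
  refine ⟨?_, by nlinarith [sq_abs (r - (j + 4 * n)), sq_nonneg (|r - (j + 4 * n)| - 1)]⟩
  linarith [abs_sub r (j + 4 * n), abs_add_le j (4 * (n : ℝ))]

lemma exists_summable_bound_G_add_spaceDerivG {t r : ℝ} (ht : 0 < t) (hr : |r| ≤ 1) :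
    ∃ u : ℤ → ℝ, Summable u ∧ ∀ (n : ℤ), ∀ τ ∈ Icc (t / 2) (2 * t), ∀ j : ℝ, |j| ≤ 3 →
      |G τ r (j + 4 * n)| + |spaceDerivG τ r (j + 4 * n)| ≤ u n := by
  set q := exp (-(2 / t))
  set C := (1 + 8 / t) * (exp (9 / (4 * t)) / √(π * t))
  refine ⟨fun n => C * ((1 + |(n : ℝ)|) * q ^ n.natAbs),
    (summable_one_add_abs_mul_pow_natAbs (by positivity)
      (Real.exp_lt_one_iff.mpr (by simp [ht]))).mul_left C, ?_⟩
  intro n τ hτ j hj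
  obtain ⟨hdist, hsq⟩ := abs_sub_le_and_le_sq hr hj n
  set s := j + 4 * (n : ℝ)
  have hτ0 : 0 < τ := by linarith [hτ.1]
  have hG : G τ r s ≤ exp (9 / (4 * t)) / √(π * t) * q ^ n.natAbs := by
    refine (G_le_of_mem_Icc ht hτ r s).trans ?_
    rw [div_mul_eq_mul_div, ← exp_nat_mul, ← exp_add, Nat.cast_natAbs, Int.cast_abs]
    gcongr
    rw [div_add' _ _ _ (by positivity), div_le_div_iff_of_pos_right (by positivity)]
    field_simp
    linarith
  have hratio : |r - s| / τ ≤ 8 / t * (1 + |(n : ℝ)|) := by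
    have h4 : 4 ≤ 8 / t * τ := by
      rw [div_mul_eq_mul_div, le_div_iff₀ ht]; linarith [hτ.1]
    rw [div_le_iff₀ hτ0]
    nlinarith [abs_nonneg (n : ℝ)]
  have hderiv : |spaceDerivG τ r s| = |r - s| / τ * G τ r s := by
    rw [spaceDerivG, abs_mul, abs_div, abs_of_pos hτ0, abs_of_nonneg (G_nonneg_s7 τ r s)]
  have hGn := G_nonneg_s7 τ r s
  calc |G τ r s| + |spaceDerivG τ r s| = (1 + |r - s| / τ) * G τ r s := by
        rw [hderiv, abs_of_nonneg hGn]; ring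
    _ ≤ (1 + 8 / t) * (1 + |(n : ℝ)|) * G τ r s := by
        gcongr
        nlinarith [abs_nonneg (n : ℝ), show 0 < 8 / t by positivity]
    _ ≤ (1 + 8 / t) * (1 + |(n : ℝ)|) * (exp (9 / (4 * t)) / √(π * t) * q ^ n.natAbs) := by
        gcongr
    _ = C * ((1 + |(n : ℝ)|) * q ^ n.natAbs) := by ring

noncomputable def imageTerm (t r x : ℝ) (n : ℤ) : ℝ := G t r (x + 4 * n) + G t r (2 - x + 4 * n)

noncomputable def imageSpaceDeriv (t r x : ℝ) (n : ℤ) : ℝ :=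
  spaceDerivG t r (x + 4 * n) - spaceDerivG t r (2 - x + 4 * n)

noncomputable def imageTimeDeriv (t r x : ℝ) (n : ℤ) : ℝ :=
  timeDerivG t r (x + 4 * n) + timeDerivG t r (2 - x + 4 * n)

lemma hasDerivAt_comp_two_sub_add {f : ℝ → ℝ} {f' : ℝ} {x c : ℝ}
    (hf : HasDerivAt f f' (2 - x + c)) : HasDerivAt (fun x => f (2 - x + c)) (-f') x := by
  refine (hf.comp x (((hasDerivAt_id' x).const_sub 2).add_const c)).congr_deriv ?_
  ring

lemma hasDerivAt_imageTerm_space (t r x : ℝ) (n : ℤ) :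
    HasDerivAt (fun x => imageTerm t r x n) (imageSpaceDeriv t r x n) x :=
  ((hasDerivAt_G_space t r _).comp_add_const x _).add
    (hasDerivAt_comp_two_sub_add (hasDerivAt_G_space t r _))

lemma hasDerivAt_imageSpaceDeriv (t r x : ℝ) (n : ℤ) :
    HasDerivAt (fun x => imageSpaceDeriv t r x n) (2 * imageTimeDeriv t r x n) x := by
  refine (((hasDerivAt_spaceDerivG t r _).comp_add_const x _).sub
    (hasDerivAt_comp_two_sub_add (hasDerivAt_spaceDerivG t r _))).congr_deriv ?_
  rw [imageTimeDeriv]; ring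

lemma hasDerivAt_imageTerm_time {t : ℝ} (ht : 0 < t) (r x : ℝ) (n : ℤ) :
    HasDerivAt (fun τ => imageTerm τ r x n) (imageTimeDeriv t r x n) t :=
  (hasDerivAt_G_time ht r _).add (hasDerivAt_G_time ht r _)

lemma continuous_imageTimeDeriv (t r : ℝ) (n : ℤ) :
    Continuous (fun x => imageTimeDeriv t r x n) := by
  unfold imageTimeDeriv timeDerivG G; fun_prop

lemma continuousAt_imageTimeDeriv {p : ℝ × ℝ} (hp : 0 < p.1) (r : ℝ) (n : ℤ) :
    ContinuousAt (fun p : ℝ × ℝ => imageTimeDeriv p.1 r p.2 n) p := by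
  have : √(2 * π * p.1) ≠ 0 := (Real.sqrt_pos.mpr (by positivity)).ne'
  unfold imageTimeDeriv timeDerivG G
  fun_prop (disch := first | positivity | assumption)

noncomputable def momentTerm (r : ℝ) (n : ℤ) (τ : ℝ) : ℝ :=
  ∫ x in (-1 : ℝ)..1, imageTerm τ r x n * x

noncomputable def fluxTerm (t r : ℝ) (n : ℤ) : ℝ :=
  (spaceDerivG t r (-1 + 4 * n) - G t r (-1 + 4 * n)) / 2

noncomputable def momentTermDeriv (t r : ℝ) (n : ℤ) : ℝ :=
  G t r (-1 + 4 * n) - G t r (1 + 4 * n) + (fluxTerm t r n - fluxTerm t r (n + 1))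

lemma integral_imageTimeDeriv_mul_id (t r : ℝ) (n : ℤ) :
    ∫ x in (-1 : ℝ)..1, imageTimeDeriv t r x n * x = momentTermDeriv t r n := by
  rw [integral_mul_id_eq_of_hasDerivAt (u := fun x => imageTerm t r x n / 2)
    (v := fun x => imageSpaceDeriv t r x n / 2)
    (fun x => (hasDerivAt_imageTerm_space t r x n).div_const 2)
    (fun x => ((hasDerivAt_imageSpaceDeriv t r x n).div_const 2).congr_deriv (by ring))
    ((continuous_imageTimeDeriv t r n).intervalIntegrable (-1) 1)]
  simp only [imageTerm, imageSpaceDeriv, momentTermDeriv, fluxTerm]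
  push_cast
  ring_nf

open Metric in
lemma hasDerivAt_momentTerm {τ : ℝ} (hτ : 0 < τ) (r : ℝ) (n : ℤ) :
    HasDerivAt (momentTerm r n) (momentTermDeriv τ r n) τ := by
  have hpos : ∀ τ' ∈ closedBall τ (τ / 2), 0 < τ' := fun τ' hτ' => by
    rw [mem_closedBall, Real.dist_eq, abs_le] at hτ'; linarith [hτ'.1]
  rw [← integral_imageTimeDeriv_mul_id]
  refine hasDerivAt_intervalIntegral_of_continuousOn (half_pos hτ)
    (fun _ _ => by unfold imageTerm; fun_prop) ?_
    (fun τ' hτ' x =>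
      (hasDerivAt_imageTerm_time (hpos τ' (ball_subset_closedBall hτ')) r x n).mul_const x)
  exact continuousOn_of_forall_continuousAt fun p hp =>
    (continuousAt_imageTimeDeriv (hpos p.1 hp.1) r n).mul continuous_snd.continuousAt

lemma exists_summable_bound_imageTerm {t r : ℝ} (ht : 0 < t) (hr : |r| ≤ 1) :
    ∃ u : ℤ → ℝ, Summable u ∧ ∀ n x, |x| ≤ 1 → |imageTerm t r x n| ≤ u n := by
  obtain ⟨u, hu, hbound⟩ := exists_summable_bound_G_add_spaceDerivG ht hr
  have htmem : t ∈ Icc (t / 2) (2 * t) := ⟨by linarith, by linarith⟩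
  refine ⟨fun n => 2 * u n, hu.mul_left 2, fun n x hx => ?_⟩
  have h1 := hbound n t htmem x (by linarith)
  have h2 := hbound n t htmem (2 - x) (by rw [abs_le] at hx ⊢; constructor <;> linarith)
  have := abs_add_le (G t r (x + 4 * n)) (G t r (2 - x + 4 * n))
  rw [imageTerm]
  linarith [abs_nonneg (spaceDerivG t r (x + 4 * n)),
    abs_nonneg (spaceDerivG t r (2 - x + 4 * n))]

lemma hasSum_momentTerm {τ r : ℝ} (hτ : 0 < τ) (hr : |r| ≤ 1) :
    HasSum (fun n => momentTerm r n τ) (∫ x in (-1 : ℝ)..1, P τ r x * x) := by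
  obtain ⟨u, hu, hbound⟩ := exists_summable_bound_imageTerm hτ hr
  have hx1 : ∀ x ∈ uIoc (-1 : ℝ) 1, |x| ≤ 1 := fun x hx => by
    rw [uIoc_of_le (by norm_num)] at hx; exact abs_le.mpr ⟨hx.1.le, hx.2⟩
  refine intervalIntegral.hasSum_integral_of_dominated_convergence (fun n _ => u n)
    (fun n => (by unfold imageTerm; fun_prop : Continuous _).aestronglyMeasurable)
    (fun n => .of_forall fun x hx => ?_) (.of_forall fun x _ => hu) intervalIntegrable_const ?_
  · rw [norm_mul, Real.norm_eq_abs, Real.norm_eq_abs]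
    exact (mul_le_of_le_one_right (abs_nonneg _) (hx1 x hx)).trans (hbound n x (hx1 x hx))
  · filter_upwards [measure_eq_zero_iff_ae_notMem.1 (measure_singleton (1 : ℝ))] with x hx hxI
    have hx' := hx1 x hxI
    have hP : P τ r x = ∑' n, imageTerm τ r x n := by
      rw [uIoc_of_le (by norm_num)] at hxI
      rw [P, if_neg (by rintro (h | h) <;> simp_all)]
      rfl
    rw [hP]
    exact ((Summable.of_norm_bounded hu fun n => hbound n x hx').hasSum).mul_right x

lemma abs_fluxTerm_le (t r : ℝ) (n : ℤ) :
    |fluxTerm t r n| ≤ (|G t r (-1 + 4 * n)| + |spaceDerivG t r (-1 + 4 * n)|) / 2 := by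
  rw [fluxTerm, abs_div, abs_two]
  gcongr
  linarith [abs_sub (spaceDerivG t r (-1 + 4 * n)) (G t r (-1 + 4 * n))]

lemma exists_summable_bound_momentTermDeriv {t r : ℝ} (ht : 0 < t) (hr : |r| ≤ 1) :
    ∃ u : ℤ → ℝ, Summable u ∧ ∀ n, ∀ τ ∈ Icc (t / 2) (2 * t), |momentTermDeriv τ r n| ≤ u n := by
  obtain ⟨u, hu, hbound⟩ := exists_summable_bound_G_add_spaceDerivG ht hr
  refine ⟨fun n => 3 * u n, hu.mul_left 3, fun n τ hτ => ?_⟩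
  beta_reduce
  have hm1 := hbound n τ hτ (-1) (by norm_num)
  have hp1 := hbound n τ hτ 1 (by norm_num)
  have hp3 := hbound n τ hτ 3 (by norm_num)
  have hflux := abs_fluxTerm_le τ r n
  have hflux' := abs_fluxTerm_le τ r (n + 1)
  rw [show -1 + 4 * ((n + 1 : ℤ) : ℝ) = 3 + 4 * n by push_cast; ring] at hflux'
  have := abs_sub (G τ r (-1 + 4 * n)) (G τ r (1 + 4 * n))
  have := abs_sub (fluxTerm τ r n) (fluxTerm τ r (n + 1))
  rw [momentTermDeriv]
  linarith [abs_add_le (G τ r (-1 + 4 * n) - G τ r (1 + 4 * n))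
    (fluxTerm τ r n - fluxTerm τ r (n + 1)), abs_nonneg (spaceDerivG τ r (-1 + 4 * n)),
    abs_nonneg (spaceDerivG τ r (1 + 4 * n)), abs_nonneg (spaceDerivG τ r (3 + 4 * n)),
    abs_nonneg (G τ r (3 + 4 * n))]

lemma tsum_momentTermDeriv {t r : ℝ} (ht : 0 < t) (hr : |r| ≤ 1) :
    ∑' n, momentTermDeriv t r n = 1 / 2 * (P t r (-1) - P t r 1) := by
  obtain ⟨u, hu, hbound⟩ := exists_summable_bound_G_add_spaceDerivG ht hr
  have htmem : t ∈ Icc (t / 2) (2 * t) := ⟨by linarith, by linarith⟩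
  have hsummable : ∀ j : ℝ, |j| ≤ 3 → Summable fun n : ℤ => G t r (j + 4 * n) := fun j hj =>
    .of_norm_bounded hu fun n => by
      linarith [hbound n t htmem j hj, abs_nonneg (spaceDerivG t r (j + 4 * n)),
        Real.norm_eq_abs (G t r (j + 4 * n))]
  have hflux : Summable (fluxTerm t r) := .of_norm_bounded hu fun n => by
    linarith [abs_fluxTerm_le t r n, hbound n t htmem (-1) (by norm_num),
      Real.norm_eq_abs (fluxTerm t r n), abs_nonneg (G t r (-1 + 4 * n)),
      abs_nonneg (spaceDerivG t r (-1 + 4 * n))]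
  have hflux1 : Summable fun n => fluxTerm t r (n + 1) :=
    (Equiv.addRight (1 : ℤ)).summable_iff.mpr hflux
  have hm1 := hsummable (-1) (by norm_num)
  have hp1 := hsummable 1 (by norm_num)
  rw [P, if_pos (by norm_num), P, if_pos (by norm_num), tsum_mul_left, tsum_mul_left]
  simp only [momentTermDeriv]
  rw [(hm1.sub hp1).tsum_add (hflux.sub hflux1),
    tsum_sub_int_add_one_eq_zero hflux, hm1.tsum_sub hp1]
  ring

/-- For every `r ∈ [−1,1]`, the function `t ↦ ∫_{−1}^{1} P_t(r,r')·r' dr'` is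
differentiable on `(0,∞)` with derivative `(1/2)·(P_t(r,−1) − P_t(r,1))`. -/
theorem deriv_first_moment (r : ℝ) (hr : r ∈ Set.Icc (-1 : ℝ) 1)
    (t : ℝ) (ht : 0 < t) :
    HasDerivAt (fun τ : ℝ => ∫ r' in (-1 : ℝ)..1, P τ r r' * r')
      (1 / 2 * (P t r (-1) - P t r 1)) t := by
  have hr' : |r| ≤ 1 := abs_le.mpr hr
  obtain ⟨u, hu, hbound⟩ := exists_summable_bound_momentTermDeriv ht hr'
  have hmem : t ∈ Ioo (t / 2) (2 * t) := ⟨by linarith, by linarith⟩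
  have hseries := hasDerivAt_tsum_of_isPreconnected hu isOpen_Ioo isPreconnected_Ioo
    (fun n τ hτ => hasDerivAt_momentTerm (by linarith [hτ.1]) r n)
    (fun n τ hτ => (Real.norm_eq_abs _).trans_le (hbound n τ (Ioo_subset_Icc_self hτ)))
    hmem (hasSum_momentTerm ht hr').summable hmem
  rw [tsum_momentTermDeriv ht hr'] at hseries
  refine hseries.congr_of_eventuallyEq ?_
  filter_upwards [Ioo_mem_nhds hmem.1 hmem.2] with τ hτ
  exact (hasSum_momentTerm (by linarith [hτ.1]) hr').tsum_eq.symm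
end

section
/- (Particle–hole symmetry of the macroscopic equation.) Let j > 0 and K ≥ 1 an integer. If ρ : [−1,1]×[0,∞) → [0,1] solves the macroscopic integral equation with initial datum ρ₀, then the function ρ̂(r,t) := 1 − ρ(−r, t) solves the macroscopic integral equation with initial datum ρ̂₀(r) := 1 − ρ₀(−r). -/
open MeasureTheory

/-- `ρ : [−1,1] × [0,∞) → [0,1]` (encoded as `ρ : ℝ → ℝ → ℝ`, first argument the
space variable) is a bounded measurable solution of the macroscopic integral
equation with initial datum `ρ₀ : [−1,1] → [0,1]`: it takes values in `[0,1]`,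
agrees with `ρ₀` at time `0`, and for all `t > 0`, `r ∈ [−1,1]`,
`ρ(r,t) = ∫_{−1}^{1} P_t(r,r')ρ₀(r')dr'
  + (j/2)∫_0^t [P_s(r,1)(1 − ρ(1,t−s)^K) − P_s(r,−1)(1 − (1 − ρ(−1,t−s))^K)] ds`. -/
def IsMacroSolution (j : ℝ) (K : ℕ) (ρ₀ : ℝ → ℝ) (ρ : ℝ → ℝ → ℝ) : Prop :=
  Measurable (Function.uncurry ρ) ∧
  (∀ r ∈ Set.Icc (-1 : ℝ) 1, ∀ t : ℝ, 0 ≤ t → ρ r t ∈ Set.Icc (0 : ℝ) 1) ∧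
  (∀ r ∈ Set.Icc (-1 : ℝ) 1, ρ r 0 = ρ₀ r) ∧
  (∀ t : ℝ, 0 < t → ∀ r ∈ Set.Icc (-1 : ℝ) 1,
    ρ r t = (∫ r' in (-1 : ℝ)..1, P t r r' * ρ₀ r')
      + j / 2 * ∫ s in (0 : ℝ)..t,
          (P s r 1 * (1 - (ρ 1 (t - s)) ^ K)
            - P s r (-1) * (1 - (1 - ρ (-1) (t - s)) ^ K)))


/-!
Reflection `r ↦ -r` preserves the Neumann kernel, `P t (-r) (-r') = P t r r'`, and swaps
the two boundary points, so under `ρ ↦ 1 - ρ(-·)` the outflow term at `1` and the inflow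
term at `-1` are exchanged with a change of sign. The constant `1` in `ρ̂` is accounted for
by conservation of mass, `∫_{-1}^{1} P t r r' dr' = 1`: off `±1` the kernel is
`S(r') + S(2 - r')` where `S` is the `4`-periodization of the Gaussian, so its integral over
`(-1, 1)` is the integral of `S` over one period, which is the total Gaussian mass.
-/

open Set

lemma G_of_nonpos {t : ℝ} (ht : t ≤ 0) (r x : ℝ) : G t r x = 0 := by
  simp [G, Real.sqrt_eq_zero'.mpr (by nlinarith [Real.pi_pos] : 2 * Real.pi * t ≤ 0)]

lemma G_neg_neg (t r x : ℝ) : G t (-r) (-x) = G t r x := by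
  rw [G, G, neg_sub_neg, ← neg_sub, neg_sq]

lemma G_eq_gaussian (t r x : ℝ) :
    G t r x = Real.exp (-(2 * t)⁻¹ * (x - r) ^ 2) / Real.sqrt (2 * Real.pi * t) := by
  rw [G, neg_div, neg_mul, ← div_eq_inv_mul, ← neg_sq, neg_sub]

lemma integrable_G {t : ℝ} (ht : 0 < t) (r : ℝ) : Integrable (G t r) := by
  simp_rw [funext (G_eq_gaussian t r)]
  exact ((integrable_exp_neg_mul_sq (by positivity)).comp_sub_right r).div_const _

lemma integral_G {t : ℝ} (ht : 0 < t) (r : ℝ) : ∫ x, G t r x = 1 := by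
  simp_rw [G_eq_gaussian, integral_div,
    integral_sub_right_eq_self (fun x => Real.exp (-(2 * t)⁻¹ * x ^ 2)), integral_gaussian]
  rw [div_eq_one_iff_eq (by positivity)]
  congr 1
  field_simp

lemma summable_G_comp_add_four_mul (t r c : ℝ) : Summable fun n : ℤ => G t r (c + 4 * n) := by
  rcases le_or_gt t 0 with ht | ht
  · simp only [G_of_nonpos ht, summable_zero]
  · refine ((HurwitzKernelBounds.summable_f_int 0 ((c - r) / 4) (t := 8 / (Real.pi * t))
      (by positivity)).div_const (Real.sqrt (2 * Real.pi * t))).congr fun n => ?_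
    rw [HurwitzKernelBounds.f_int, pow_zero, one_mul, G]
    congr 2
    field_simp
    ring

section Periodization

variable {E : Type*} [NormedAddCommGroup E] [NormedSpace ℝ E] {f : ℝ → E} {p : ℝ}

theorem MeasureTheory.Integrable.hasSum_setIntegral_Ioc_comp_add_mul (hf : Integrable f)
    (hp : 0 < p) (a : ℝ) :
    HasSum (fun n : ℤ => ∫ x in Ioc a (a + p), f (x + p * n)) (∫ x, f x) := by
  have := hasSum_integral_iUnion (fun n => measurableSet_Ioc)
    (pairwise_disjoint_Ioc_add_zsmul a p) hf.integrableOn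
  rw [iUnion_Ioc_add_zsmul hp, Measure.restrict_univ] at this
  convert this using 2
  rw [← intervalIntegral.integral_of_le (by linarith), intervalIntegral.integral_comp_add_right,
    intervalIntegral.integral_of_le (by linarith)]
  simp only [zsmul_eq_mul, Int.cast_add, Int.cast_one]
  congr 2
  congr 1 <;> ring

theorem MeasureTheory.Integrable.setIntegral_Ioc_tsum_comp_add_mul [CompleteSpace E]
    (hf : Integrable f) (hp : 0 < p) (a : ℝ) :
    ∫ x in Ioc a (a + p), ∑' n : ℤ, f (x + p * n) = ∫ x, f x :=
  (hasSum_integral_of_summable_integral_norm (fun _ => (hf.comp_add_right _).integrableOn)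
    (hf.norm.hasSum_setIntegral_Ioc_comp_add_mul hp a).summable).tsum_eq.symm.trans
    (hf.hasSum_setIntegral_Ioc_comp_add_mul hp a).tsum_eq

end Periodization

noncomputable def periodizedG (t r x : ℝ) : ℝ := ∑' n : ℤ, G t r (x + 4 * n)

lemma periodizedG_add_four (t r x : ℝ) : periodizedG t r (x + 4) = periodizedG t r x := by
  rw [periodizedG, periodizedG, ← (Equiv.addRight 1).tsum_eq fun n : ℤ => G t r (x + 4 * n)]
  refine tsum_congr fun n => ?_
  rw [Equiv.coe_addRight, Int.cast_add, Int.cast_one]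
  ring_nf

lemma periodizedG_neg_neg (t r x : ℝ) : periodizedG t (-r) (-x) = periodizedG t r x := by
  rw [periodizedG, periodizedG, ← (Equiv.neg ℤ).tsum_eq fun n : ℤ => G t r (x + 4 * n)]
  refine tsum_congr fun n => ?_
  rw [← G_neg_neg, Equiv.neg_apply, Int.cast_neg]
  ring_nf

lemma P_of_boundary {t r x : ℝ} (hx : x = 1 ∨ x = -1) : P t r x = 2 * periodizedG t r x := by
  rw [P, if_pos hx, periodizedG, tsum_mul_left]

lemma P_of_interior {t r x : ℝ} (hx : ¬(x = 1 ∨ x = -1)) :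
    P t r x = periodizedG t r x + periodizedG t r (2 - x) := by
  rw [P, if_neg hx, periodizedG, periodizedG, Summable.tsum_add
    (summable_G_comp_add_four_mul t r x) (summable_G_comp_add_four_mul t r (2 - x))]

lemma P_neg_neg (t r x : ℝ) : P t (-r) (-x) = P t r x := by
  by_cases hx : x = 1 ∨ x = -1
  · have hx' : -x = 1 ∨ -x = -1 := by
      rcases hx with rfl | rfl <;> norm_num
    rw [P_of_boundary hx, P_of_boundary hx', periodizedG_neg_neg]
  · have hx' : ¬(-x = 1 ∨ -x = -1) := by
      rwa [neg_eq_iff_eq_neg, neg_eq_iff_eq_neg, neg_neg, or_comm]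
    rw [P_of_interior hx, P_of_interior hx', periodizedG_neg_neg,
      show 2 - -x = -(2 - x - 4) by ring, periodizedG_neg_neg,
      ← periodizedG_add_four t r (2 - x - 4), sub_add_cancel]

lemma P_ae_eq (t r : ℝ) :
    P t r =ᵐ[volume] fun x => periodizedG t r x + periodizedG t r (2 - x) := by
  have hnull : volume ({1, -1} : Set ℝ) = 0 := (toFinite _).measure_zero _
  filter_upwards [measure_eq_zero_iff_ae_notMem.mp hnull] with x hx
  exact P_of_interior hx

lemma integral_periodizedG {t : ℝ} (ht : 0 < t) (r a : ℝ) :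
    ∫ x in Ioc a (a + 4), periodizedG t r x = 1 := by
  simp only [periodizedG]
  rw [(integrable_G ht r).setIntegral_Ioc_tsum_comp_add_mul four_pos a, integral_G ht r]

-- its integral is `1 ≠ 0`, so it cannot be the junk value of a non-integrable function
lemma integrableOn_periodizedG {t : ℝ} (ht : 0 < t) (r a : ℝ) :
    IntegrableOn (periodizedG t r) (Ioc a (a + 4)) :=
  Integrable.of_integral_ne_zero (by simp [integral_periodizedG ht])

lemma integral_P {t : ℝ} (ht : 0 < t) (r : ℝ) : ∫ x in (-1 : ℝ)..1, P t r x = 1 := by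
  have hint : IntegrableOn (periodizedG t r) (Ioc (-1) 3) := by
    simpa only [show (-1 : ℝ) + 4 = 3 by norm_num] using integrableOn_periodizedG ht r (-1)
  have hleft : IntervalIntegrable (periodizedG t r) volume (-1) 1 :=
    (intervalIntegrable_iff_integrableOn_Ioc_of_le (by norm_num)).2
      (hint.mono_set (Ioc_subset_Ioc_right (by norm_num)))
  have hright : IntervalIntegrable (periodizedG t r) volume 1 3 :=
    (intervalIntegrable_iff_integrableOn_Ioc_of_le (by norm_num)).2
      (hint.mono_set (Ioc_subset_Ioc_left (by norm_num)))
  have hreflect : IntervalIntegrable (fun x => periodizedG t r (2 - x)) volume (-1) 1 := by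
    have := (hright.comp_sub_left 2).symm
    norm_num at this
    exact this
  rw [intervalIntegral.integral_congr_ae ((P_ae_eq t r).mono fun x hx _ => hx),
    intervalIntegral.integral_add hleft hreflect, intervalIntegral.integral_comp_sub_left,
    show (2 : ℝ) - 1 = 1 by norm_num, show (2 : ℝ) - -1 = 3 by norm_num,
    intervalIntegral.integral_add_adjacent_intervals hleft hright,
    intervalIntegral.integral_of_le (by norm_num)]
  simpa only [show (-1 : ℝ) + 4 = 3 by norm_num] using integral_periodizedG ht r (-1)

lemma intervalIntegrable_P {t : ℝ} (ht : 0 < t) (r : ℝ) :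
    IntervalIntegrable (P t r) volume (-1) 1 :=
  intervalIntegral.intervalIntegrable_of_integral_ne_zero (by simp [integral_P ht])

lemma integral_P_mul_one_sub_comp_neg {t : ℝ} (ht : 0 < t) (r : ℝ) {f g : ℝ → ℝ} {C : ℝ}
    (hg : Measurable g) (hgC : ∀ x ∈ Icc (-1 : ℝ) 1, |g x| ≤ C)
    (hfg : EqOn f g (Icc (-1) 1)) :
    ∫ x in (-1 : ℝ)..1, P t r x * (1 - f (-x))
      = 1 - ∫ x in (-1 : ℝ)..1, P t (-r) x * f x := by
  have hI : uIcc (-1 : ℝ) 1 = Icc (-1) 1 := uIcc_of_le (by norm_num)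
  have hPg : IntervalIntegrable (fun x => P t r x * g (-x)) volume (-1) 1 := by
    refine ⟨(intervalIntegrable_P ht r).1.mul_bdd (c := C)
      (hg.comp measurable_neg).aestronglyMeasurable ?_, by simp⟩
    filter_upwards [ae_restrict_mem measurableSet_Ioc] with x hx
    exact hgC (-x) ⟨by linarith [hx.2], by linarith [hx.1]⟩
  have hcongr_neg : ∫ x in (-1 : ℝ)..1, P t r x * (1 - f (-x))
      = ∫ x in (-1 : ℝ)..1, P t r x * (1 - g (-x)) :=
    intervalIntegral.integral_congr fun x hx => by
      rw [hI] at hx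
      simp only [hfg (neg_mem_Icc_iff.2 (by simpa using hx))]
  have hcongr : ∫ x in (-1 : ℝ)..1, P t (-r) x * f x
      = ∫ x in (-1 : ℝ)..1, P t (-r) x * g x :=
    intervalIntegral.integral_congr fun x hx => by
      rw [hI] at hx
      simp only [hfg hx]
  rw [hcongr_neg, hcongr]
  simp_rw [mul_one_sub]
  rw [intervalIntegral.integral_sub (intervalIntegrable_P ht r) hPg, integral_P ht r]
  simpa only [neg_neg, P_neg_neg] using
    congrArg (1 - ·) (intervalIntegral.integral_comp_neg (a := -1) (b := 1)
      fun y => P t (-r) y * g y)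

theorem macro_particle_hole_symmetry_general (j : ℝ) (K : ℕ)
    (ρ₀ : ℝ → ℝ) (ρ : ℝ → ℝ → ℝ) (hρ : IsMacroSolution j K ρ₀ ρ) :
    IsMacroSolution j K (fun r => 1 - ρ₀ (-r)) (fun r t => 1 - ρ (-r) t) := by
  obtain ⟨hmeas, hrange, hinit, heq⟩ := hρ
  have hneg : ∀ x ∈ Icc (-1 : ℝ) 1, -x ∈ Icc (-1 : ℝ) 1 := fun x hx => by
    rwa [neg_mem_Icc_iff, neg_neg]
  refine ⟨measurable_const.sub (hmeas.comp (measurable_fst.neg.prodMk measurable_snd)),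
    fun r hr t ht => ?_, fun r hr => by simp only [hinit (-r) (hneg r hr)], fun t ht r hr => ?_⟩
  · obtain ⟨h0, h1⟩ := hrange (-r) (hneg r hr) t ht
    exact ⟨by linarith, by linarith⟩
  · have hinitial := integral_P_mul_one_sub_comp_neg ht r (g := fun x => ρ x 0) (C := 1)
      (hmeas.comp (measurable_id.prodMk measurable_const))
      (fun x hx => abs_le.2 ⟨by linarith [(hrange x hx 0 le_rfl).1], (hrange x hx 0 le_rfl).2⟩)
      (fun x hx => (hinit x hx).symm)
    have hboundary : ∫ s in (0 : ℝ)..t, (P s r 1 * (1 - (1 - ρ (-1) (t - s)) ^ K)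
          - P s r (-1) * (1 - (1 - (1 - ρ 1 (t - s))) ^ K))
        = -∫ s in (0 : ℝ)..t, (P s (-r) 1 * (1 - ρ 1 (t - s) ^ K)
          - P s (-r) (-1) * (1 - (1 - ρ (-1) (t - s)) ^ K)) := by
      rw [← intervalIntegral.integral_neg]
      refine intervalIntegral.integral_congr fun s _ => ?_
      simp only [← P_neg_neg s r 1, ← P_neg_neg s r (-1), neg_neg]
      ring
    simp only [neg_neg]
    rw [hinitial, hboundary, heq t ht (-r) (hneg r hr)]
    ring

/-- Particle–hole symmetry of the macroscopic equation: if `ρ` solves the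
macroscopic integral equation with initial datum `ρ₀`, then
`ρ̂(r,t) := 1 − ρ(−r,t)` solves it with initial datum `ρ̂₀(r) := 1 − ρ₀(−r)`. -/
theorem macro_particle_hole_symmetry (j : ℝ) (hj : 0 < j) (K : ℕ) (hK : 1 ≤ K)
    (ρ₀ : ℝ → ℝ) (ρ : ℝ → ℝ → ℝ) (hρ : IsMacroSolution j K ρ₀ ρ) :
    IsMacroSolution j K (fun r => 1 - ρ₀ (-r)) (fun r t => 1 - ρ (-r) t) :=
  macro_particle_hole_symmetry_general j K ρ₀ ρ hρ
end
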